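/- Let λ, μ be partitions of length n, set m = max(λ_1, μ_1), λ̂ = (m−λ_n, m−λ_{n−1}, …, m−λ_1) and μ̂ = (m−μ_n, …, m−μ_1) (these are partitions of length n). Then U_{λ,μ}(q) = K̃^{C_n}_{λ̂,μ̂}(q). -/

import Mathlib

open Finset Polynomial

noncomputable section

/-- The standard basis vector `ε_i` of `ℤ^n`. -/
def eps (n : ℕ) (i : Fin n) : Fin n → ℤ := Pi.single i 1

/-- Pairs `(i,j)` with `i < j`. -/
def pairsLt (n : ℕ) : Finset (Fin n × Fin n) :=
  Finset.univ.filter fun p => p.1 < p.2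

/-- Pairs `(i,j)` with `i ≤ j`. -/
def pairsLe (n : ℕ) : Finset (Fin n × Fin n) :=
  Finset.univ.filter fun p => p.1 ≤ p.2

/-- Positive roots of type `A_{n-1}`: the `ε_i - ε_j`, `i < j`. -/
def RA (n : ℕ) : Finset (Fin n → ℤ) :=
  (pairsLt n).image fun p => eps n p.1 - eps n p.2

/-- Positive roots of type `D_n`: the `ε_i - ε_j` and `ε_i + ε_j`, `i < j`. -/
def RD (n : ℕ) : Finset (Fin n → ℤ) :=
  RA n ∪ ((pairsLt n).image fun p => eps n p.1 + eps n p.2)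

/-- Positive roots of type `C_n`: those of `D_n` together with the `2ε_i`. -/
def RC (n : ℕ) : Finset (Fin n → ℤ) :=
  RD n ∪ (Finset.univ.image fun i : Fin n => (2 : ℤ) • eps n i)

/-- Positive roots of type `B_n`: those of `D_n` together with the `ε_i`. -/
def RB (n : ℕ) : Finset (Fin n → ℤ) :=
  RD n ∪ (Finset.univ.image fun i : Fin n => eps n i)

/-- The `q`-partition function attached to a finite set `R` of positive roots:
`P_q(β) = Σ_m q^{Σ_α m(α)}`, the sum over the (finitely many) functions
`m : R → ℕ` with `Σ_α m(α)·α = β`. -/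
def Pq (n : ℕ) (R : Finset (Fin n → ℤ)) (β : Fin n → ℤ) : Polynomial ℤ :=
  ∑ᶠ m ∈ {m : (Fin n → ℤ) → ℕ |
      (∀ α, α ∉ R → m α = 0) ∧ ∑ α ∈ R, m α • α = β},
    (X : Polynomial ℤ) ^ ∑ α ∈ R, m α

/-- `ρ_n = (n, n-1, ..., 1)`. -/
def rho (n : ℕ) : Fin n → ℤ := fun i => (n : ℤ) - ((i : ℕ) : ℤ)

/-- `ρ_{D_n} = (n-1, n-2, ..., 0)`. -/
def rhoD (n : ℕ) : Fin n → ℤ := fun i => (n : ℤ) - ((i : ℕ) : ℤ) - 1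

/-- The restricted alternating sum `K̃_{λ,μ}(q) = Σ_{σ ∈ S_n} sgn(σ) P_q(σ(λ+ρ_n) - (μ+ρ_n))`
attached to a set `R` of positive roots.  For `R = RA n` this is the type `A_{n-1}`
Kostka-Foulkes polynomial `K^{A_{n-1}}_{λ,μ}(q)`. -/
def KT (n : ℕ) (R : Finset (Fin n → ℤ)) (lam mu : Fin n → ℤ) : Polynomial ℤ :=
  ∑ σ : Equiv.Perm (Fin n),
    (Equiv.Perm.sign σ : ℤ) •
      Pq n R (fun i => (lam + rho n) (σ i) - (mu + rho n) i)

/-- The type `C_n` Kostka-Foulkes polynomial: the alternating sum over the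
hyperoctahedral group `W_{C_n}` (signed permutations, a signed permutation being
encoded as a pair `(σ, e)` acting by `v ↦ (i ↦ e i * v (σ i))`, whose determinant
is `sgn(σ) * ∏ i, e i`), with `ρ_{C_n} = ρ_n`. -/
def KC (n : ℕ) (lam mu : Fin n → ℤ) : Polynomial ℤ :=
  ∑ σ : Equiv.Perm (Fin n), ∑ e : Fin n → ℤˣ,
    ((Equiv.Perm.sign σ : ℤ) * ∏ i, (e i : ℤ)) •
      Pq n (RC n) (fun i => (e i : ℤ) * (lam + rho n) (σ i) - (mu + rho n) i)

/-- The type `D_n` Kostka-Foulkes polynomial: the alternating sum over `W_{D_n}`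
(signed permutations with an even number of sign changes), with `ρ_{D_n} = (n-1, ..., 0)`. -/
def KD (n : ℕ) (lam mu : Fin n → ℤ) : Polynomial ℤ :=
  ∑ σ : Equiv.Perm (Fin n),
    ∑ e ∈ Finset.univ.filter (fun e : Fin n → ℤˣ => ∏ i, e i = 1),
      ((Equiv.Perm.sign σ : ℤ) * ∏ i, (e i : ℤ)) •
        Pq n (RD n) (fun i => (e i : ℤ) * (lam + rhoD n) (σ i) - (mu + rhoD n) i)

/-- `c(δ)`: the number of families `(e_{rs})_{1 ≤ r ≤ s ≤ n}` of nonnegative integers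
with `Σ_{r ≤ s} e_{rs} (ε_r + ε_s) = δ`. -/
def cC (n : ℕ) (δ : Fin n → ℤ) : ℕ :=
  Set.ncard {e : Fin n × Fin n → ℕ |
    (∀ p, p ∉ pairsLe n → e p = 0) ∧
    ∑ p ∈ pairsLe n, e p • (eps n p.1 + eps n p.2) = δ}

/-- `d(δ)`: the number of families `(e_{rs})_{1 ≤ r < s ≤ n}` of nonnegative integers
with `Σ_{r < s} e_{rs} (ε_r + ε_s) = δ`. -/
def dD (n : ℕ) (δ : Fin n → ℤ) : ℕ :=
  Set.ncard {e : Fin n × Fin n → ℕ |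
    (∀ p, p ∉ pairsLt n → e p = 0) ∧
    ∑ p ∈ pairsLt n, e p • (eps n p.1 + eps n p.2) = δ}

/-- `f_q(β)`: the coefficient of `x^β` in
`∏_{i<j} (1 - q x_i/x_j)⁻¹ ∏_{r<s} (1 - q/(x_r x_s))⁻¹`, i.e. the sum of
`q^{Σ a + Σ b}` over families `a = (a_{ij})_{i<j}`, `b = (b_{rs})_{r<s}` of
nonnegative integers with `Σ a_{ij}(ε_i - ε_j) - Σ b_{rs}(ε_r + ε_s) = β`. -/
def fq (n : ℕ) (β : Fin n → ℤ) : Polynomial ℤ :=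
  ∑ᶠ ab ∈ {ab : ((Fin n × Fin n) → ℕ) × ((Fin n × Fin n) → ℕ) |
      (∀ p, p ∉ pairsLt n → ab.1 p = 0) ∧ (∀ p, p ∉ pairsLt n → ab.2 p = 0) ∧
      ((∑ p ∈ pairsLt n, ab.1 p • (eps n p.1 - eps n p.2)) -
        ∑ p ∈ pairsLt n, ab.2 p • (eps n p.1 + eps n p.2)) = β},
    (X : Polynomial ℤ) ^ ((∑ p ∈ pairsLt n, ab.1 p) + ∑ p ∈ pairsLt n, ab.2 p)

/-- `F_q(β)`: the coefficient of `x^β` in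
`∏_{i<j} (1 - q x_i/x_j)⁻¹ ∏_{r≤s} (1 - q/(x_r x_s))⁻¹`, i.e. the sum of
`q^{Σ a + Σ b}` over families `a = (a_{ij})_{i<j}`, `b = (b_{rs})_{r≤s}` of
nonnegative integers with `Σ a_{ij}(ε_i - ε_j) - Σ b_{rs}(ε_r + ε_s) = β`. -/
def Fq (n : ℕ) (β : Fin n → ℤ) : Polynomial ℤ :=
  ∑ᶠ ab ∈ {ab : ((Fin n × Fin n) → ℕ) × ((Fin n × Fin n) → ℕ) |
      (∀ p, p ∉ pairsLt n → ab.1 p = 0) ∧ (∀ p, p ∉ pairsLe n → ab.2 p = 0) ∧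
      ((∑ p ∈ pairsLt n, ab.1 p • (eps n p.1 - eps n p.2)) -
        ∑ p ∈ pairsLe n, ab.2 p • (eps n p.1 + eps n p.2)) = β},
    (X : Polynomial ℤ) ^ ((∑ p ∈ pairsLt n, ab.1 p) + ∑ p ∈ pairsLe n, ab.2 p)

/-- The `q`-multiplicity `u_{λ,μ}(q) = Σ_{σ ∈ S_n} sgn(σ) f_q(σ(λ+ρ_n) - (μ+ρ_n))`. -/
def uP (n : ℕ) (lam mu : Fin n → ℤ) : Polynomial ℤ :=
  ∑ σ : Equiv.Perm (Fin n),
    (Equiv.Perm.sign σ : ℤ) •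
      fq n (fun i => (lam + rho n) (σ i) - (mu + rho n) i)

/-- The `q`-multiplicity `U_{λ,μ}(q) = Σ_{σ ∈ S_n} sgn(σ) F_q(σ(λ+ρ_n) - (μ+ρ_n))`. -/
def UP (n : ℕ) (lam mu : Fin n → ℤ) : Polynomial ℤ :=
  ∑ σ : Equiv.Perm (Fin n),
    (Equiv.Perm.sign σ : ℤ) •
      Fq n (fun i => (lam + rho n) (σ i) - (mu + rho n) i)

/-- `1_ℕ(β) = 1` if all coordinates of `β` are nonnegative, and `0` otherwise. -/
def indNat (n : ℕ) (v : Fin n → ℤ) : ℤ := if ∀ i, 0 ≤ v i then 1 else 0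

/-- The branching coefficient `b_{λ,ν} = Σ_{σ ∈ S_n} sgn(σ) 1_ℕ(σ(λ+ρ_n) - (ν+ρ_n))`. -/
def bcoef (n : ℕ) (lam nu : Fin n → ℤ) : ℤ :=
  ∑ σ : Equiv.Perm (Fin n),
    (Equiv.Perm.sign σ : ℤ) *
      indNat n (fun i => (lam + rho n) (σ i) - (nu + rho n) i)

/-- The coefficient of `q^j` (for `j : ℤ`) in a polynomial: `0` for negative `j`. -/
def zcoeff (p : Polynomial ℤ) (j : ℤ) : ℤ := if 0 ≤ j then p.coeff j.toNat else 0

/-- The conjugate partition, padded with zeros to length `n`: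
`λ'_i = #{j : λ_j ≥ i}` (for the `i`-th coordinate, `i = 1, ..., n`). -/
def conj (n : ℕ) (lam : Fin n → ℤ) : Fin n → ℤ :=
  fun i => ((Finset.univ.filter fun j : Fin n => ((i : ℕ) : ℤ) + 1 ≤ lam j).card : ℤ)

end

/-! `F_q` is the `q`-partition function of the family `ε_i - ε_j` (`i < j`), `-(ε_r + ε_s)`
(`r ≤ s`), and `-w₀` maps this family bijectively onto `R_C^+`; hence `F_q(β) = P_q^C(-w₀ β)`.
Since `λ̂ + ρ_n = (m + n + 1) - w₀(λ + ρ_n)`, we get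
`-w₀(σ(λ + ρ_n) - (μ + ρ_n)) = σ'(λ̂ + ρ_n) - (μ̂ + ρ_n)` for `σ' = w₀ σ w₀`, which has the sign
of `σ`, so the two alternating sums agree term by term. -/

section

variable {n : ℕ}

@[simp] theorem mem_pairsLt {p : Fin n × Fin n} : p ∈ pairsLt n ↔ p.1 < p.2 := by
  simp [pairsLt]

@[simp] theorem mem_pairsLe {p : Fin n × Fin n} : p ∈ pairsLe n ↔ p.1 ≤ p.2 := by
  simp [pairsLe]

theorem mem_RC {α : Fin n → ℤ} :
    α ∈ RC n ↔
      (∃ i j, i < j ∧ eps n i - eps n j = α) ∨ ∃ i j, i ≤ j ∧ eps n i + eps n j = α := by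
  simp only [RC, RD, RA, Finset.mem_union, Finset.mem_image, mem_pairsLt, Finset.mem_univ,
    true_and, Prod.exists]
  constructor
  · rintro ((⟨i, j, h, rfl⟩ | ⟨i, j, h, rfl⟩) | ⟨i, rfl⟩)
    · exact .inl ⟨i, j, h, rfl⟩
    · exact .inr ⟨i, j, h.le, rfl⟩
    · exact .inr ⟨i, i, le_rfl, (two_smul ℤ _).symm⟩
  · rintro (⟨i, j, h, rfl⟩ | ⟨i, j, h, rfl⟩)
    · exact .inl (.inl ⟨i, j, h, rfl⟩)
    · rcases h.lt_or_eq with h | rfl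
      · exact .inl (.inr ⟨i, j, h, rfl⟩)
      · exact .inr ⟨i, two_smul ℤ _⟩

theorem eq_of_eps_sub_eps_eq {i j k l : Fin n} (hij : i < j)
    (h : eps n i - eps n j = eps n k - eps n l) : i = k ∧ j = l := by
  rw [sub_eq_sub_iff_add_eq_add] at h
  rcases (Pi.single_add_single_eq_single_add_single one_ne_zero one_ne_zero).mp h with
    ⟨hik, hlj⟩ | ⟨-, hij', -⟩ | ⟨h2, -⟩
  · exact ⟨hik, hlj.symm⟩
  · exact absurd hij' hij.ne
  · norm_num at h2

theorem eq_of_eps_add_eps_eq {i j k l : Fin n} (hij : i ≤ j) (hkl : k ≤ l)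
    (h : eps n i + eps n j = eps n k + eps n l) : i = k ∧ j = l := by
  rcases (Pi.single_add_single_eq_single_add_single one_ne_zero one_ne_zero).mp h with
    h | ⟨-, rfl, rfl⟩ | ⟨h2, -⟩
  · exact h
  · exact ⟨le_antisymm hij hkl, le_antisymm hkl hij⟩
  · norm_num at h2

def fqIndex (n : ℕ) : Finset ((Fin n × Fin n) ⊕ (Fin n × Fin n)) :=
  (pairsLt n).disjSum (pairsLe n)

def fqRoot : (Fin n × Fin n) ⊕ (Fin n × Fin n) → Fin n → ℤ :=
  Sum.elim (fun p => eps n p.1 - eps n p.2) (fun p => -(eps n p.1 + eps n p.2))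

theorem fqRoot_injOn : Set.InjOn (fqRoot (n := n)) (fqIndex n) := by
  have ne_of_coord_sum {i j k l : Fin n} :
      eps n i - eps n j ≠ -(eps n k + eps n l) := fun h => by
    have := congrArg (fun v => ∑ k, v k) h
    simp only [Pi.sub_apply, Pi.neg_apply, Pi.add_apply, Finset.sum_sub_distrib,
      Finset.sum_neg_distrib, Finset.sum_add_distrib, eps, Fintype.sum_pi_single'] at this
    omega
  rintro (⟨i, j⟩ | ⟨i, j⟩) hp (⟨k, l⟩ | ⟨k, l⟩) hq h <;>
    simp only [fqIndex, Finset.mem_coe, Finset.inl_mem_disjSum, Finset.inr_mem_disjSum,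
      mem_pairsLt, mem_pairsLe, fqRoot, Sum.elim_inl, Sum.elim_inr] at hp hq h
  · obtain ⟨rfl, rfl⟩ := eq_of_eps_sub_eps_eq hp h; rfl
  · exact (ne_of_coord_sum h).elim
  · exact (ne_of_coord_sum h.symm).elim
  · obtain ⟨rfl, rfl⟩ := eq_of_eps_add_eps_eq hp hq (neg_inj.mp h); rfl

/-- `v ↦ -w₀ v`, where the longest element `w₀` of `S_n` reverses the coordinates. -/
def negRev : (Fin n → ℤ) ≃+ (Fin n → ℤ) where
  toFun v i := -v i.rev
  invFun v i := -v i.rev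
  left_inv v := by simp
  right_inv v := by simp
  map_add' v w := by funext i; simp [add_comm]

theorem negRev_apply (v : Fin n → ℤ) (i : Fin n) : negRev v i = -v i.rev := rfl

theorem negRev_eps (i : Fin n) : negRev (eps n i) = -eps n i.rev := by
  funext k
  simp [negRev_apply, eps, Pi.single_apply, Fin.rev_eq_iff]

theorem image_negRev_fqRoot : (fqIndex n).image (negRev ∘ fqRoot) = RC n := by
  ext α
  simp only [Finset.mem_image, fqIndex, Sum.exists, Finset.inl_mem_disjSum,
    Finset.inr_mem_disjSum, Prod.exists, mem_pairsLt, mem_pairsLe, Function.comp_apply, fqRoot,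
    Sum.elim_inl, Sum.elim_inr, map_sub, map_neg, map_add, negRev_eps, mem_RC]
  refine or_congr ⟨?_, ?_⟩ ⟨?_, ?_⟩
  · rintro ⟨i, j, h, rfl⟩
    exact ⟨j.rev, i.rev, Fin.rev_lt_rev.2 h, by abel⟩
  · rintro ⟨i, j, h, rfl⟩
    exact ⟨j.rev, i.rev, Fin.rev_lt_rev.2 h, by simp only [Fin.rev_rev]; abel⟩
  · rintro ⟨i, j, h, rfl⟩
    exact ⟨j.rev, i.rev, Fin.rev_le_rev.2 h, by abel⟩
  · rintro ⟨i, j, h, rfl⟩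
    exact ⟨j.rev, i.rev, Fin.rev_le_rev.2 h, by simp [add_comm]⟩

theorem Pq_image_eq_finsum {ι : Type*} (s : Finset ι) (v : ι → Fin n → ℤ) (hv : Set.InjOn v s)
    (β : Fin n → ℤ) :
    Pq n (s.image v) β = ∑ᶠ c ∈ {c : ι → ℕ | (∀ p, p ∉ s → c p = 0) ∧ ∑ p ∈ s, c p • v p = β},
      (X : ℤ[X]) ^ ∑ p ∈ s, c p := by
  classical
  set restrict : ((Fin n → ℤ) → ℕ) → ι → ℕ := fun m p => if p ∈ s then m (v p) else 0
  have sum_restrict {M : Type} [AddCommMonoid M] (m : (Fin n → ℤ) → ℕ)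
      (f : ℕ → (Fin n → ℤ) → M) :
      ∑ p ∈ s, f (restrict m p) (v p) = ∑ α ∈ s.image v, f (m α) α := by
    rw [Finset.sum_image hv]
    exact Finset.sum_congr rfl fun p hp => by simp only [restrict, if_pos hp]
  unfold Pq
  refine finsum_mem_eq_of_bijOn restrict ⟨?_, ?_, ?_⟩ ?_
  · rintro m ⟨-, hm⟩
    exact ⟨fun p hp => if_neg hp, by rw [sum_restrict m (fun k α => k • α), hm]⟩
  · rintro m ⟨hm, -⟩ m' ⟨hm', -⟩ h
    funext α
    by_cases hα : α ∈ s.image v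
    · obtain ⟨p, hp, rfl⟩ := Finset.mem_image.mp hα
      simpa [restrict, hp] using congrFun h p
    · rw [hm α hα, hm' α hα]
  · rintro c ⟨hc, hcβ⟩
    set m : (Fin n → ℤ) → ℕ := fun α => ∑ p ∈ s with v p = α, c p
    have hmc : restrict m = c := by
      funext p
      by_cases hp : p ∈ s
      · simp only [restrict, m, if_pos hp]
        refine Finset.sum_eq_single_of_mem p (by simp [hp]) fun q hq hqp => ?_
        simp only [Finset.mem_filter] at hq
        exact absurd (hv hq.1 hp hq.2) hqp
      · simp only [restrict, if_neg hp, hc p hp]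
    refine ⟨m, ⟨fun α hα => Finset.sum_eq_zero fun p hp => ?_, ?_⟩, hmc⟩
    · simp only [Finset.mem_filter] at hp
      exact absurd (Finset.mem_image_of_mem v hp.1) (hp.2 ▸ hα)
    · rw [← sum_restrict m (fun k α => k • α), hmc, hcβ]
  · rintro m -
    rw [← sum_restrict m (fun k _ => k)]

theorem Fq_eq_finsum (β : Fin n → ℤ) :
    Fq n β = ∑ᶠ c ∈ {c : (Fin n × Fin n) ⊕ (Fin n × Fin n) → ℕ |
        (∀ p, p ∉ fqIndex n → c p = 0) ∧ ∑ p ∈ fqIndex n, c p • fqRoot p = β},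
      (X : ℤ[X]) ^ ∑ p ∈ fqIndex n, c p := by
  unfold Fq
  refine finsum_mem_eq_of_bijOn (Equiv.sumArrowEquivProdArrow _ _ ℕ).symm
    (Equiv.bijOn _ fun ⟨a, b⟩ => ?_) fun ⟨a, b⟩ _ => ?_
  · simp only [fqIndex, fqRoot, Set.mem_ofPred_eq, Finset.sum_disjSum, Sum.forall,
      Equiv.sumArrowEquivProdArrow_symm_apply_inl, Equiv.sumArrowEquivProdArrow_symm_apply_inr,
      Finset.inl_mem_disjSum, Finset.inr_mem_disjSum, Sum.elim_inl, Sum.elim_inr, smul_neg,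
      Finset.sum_neg_distrib, ← sub_eq_add_neg, and_assoc]
  · simp only [fqIndex, Finset.sum_disjSum, Equiv.sumArrowEquivProdArrow_symm_apply_inl,
      Equiv.sumArrowEquivProdArrow_symm_apply_inr]

theorem Fq_eq_Pq_negRev (β : Fin n → ℤ) : Fq n β = Pq n (RC n) (negRev β) := by
  rw [Fq_eq_finsum, ← image_negRev_fqRoot,
    Pq_image_eq_finsum _ _ (negRev.injective.comp_injOn fqRoot_injOn)]
  simp only [Function.comp_apply, ← map_nsmul, ← map_sum, negRev.injective.eq_iff]

theorem dual_add_rho (c : ℤ) (v : Fin n → ℤ) (j : Fin n) :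
    ((fun i : Fin n => c - v i.rev) + rho n) j = c + n + 1 - (v + rho n) j.rev := by
  have := j.isLt
  simp only [Pi.add_apply, rho, Fin.val_rev]
  omega

end

theorem U_eq_KtildeC_dual_general (n : ℕ) (hn : 0 < n) (lam mu : Fin n → ℤ) :
    UP n lam mu =
      KT n (RC n)
        (fun i => max (lam ⟨0, hn⟩) (mu ⟨0, hn⟩) - lam i.rev)
        (fun i => max (lam ⟨0, hn⟩) (mu ⟨0, hn⟩) - mu i.rev) := by
  refine Fintype.sum_equiv (Fin.revPerm.permCongr) _ _ fun σ => ?_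
  rw [Equiv.Perm.sign_permCongr, Fq_eq_Pq_negRev]
  congr 2
  funext i
  simp only [negRev_apply, dual_add_rho, Equiv.permCongr_apply, Fin.revPerm_symm,
    Fin.revPerm_apply, Fin.rev_rev]
  ring

/-- for partitions `λ, μ` of length `n`, with `m = max(λ_1, μ_1)`,
`λ̂ = (m-λ_n, ..., m-λ_1)` and `μ̂ = (m-μ_n, ..., m-μ_1)`, one has
`U_{λ,μ}(q) = K̃^{C_n}_{λ̂,μ̂}(q)`. -/
theorem U_eq_KtildeC_dual (n : ℕ) (hn : 0 < n) (lam mu : Fin n → ℤ)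
    (hlam : Antitone lam) (hlam0 : ∀ i, 0 ≤ lam i)
    (hmu : Antitone mu) (hmu0 : ∀ i, 0 ≤ mu i) :
    UP n lam mu =
      KT n (RC n)
        (fun i => max (lam ⟨0, hn⟩) (mu ⟨0, hn⟩) - lam i.rev)
        (fun i => max (lam ⟨0, hn⟩) (mu ⟨0, hn⟩) - mu i.rev) :=
  U_eq_KtildeC_dual_general n hn lam mu
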